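/- arXiv:2501.17610 — 4 statements merged into one kernel-verified Lean document; each statement's English description precedes it below -/
import Mathlib

section
/- Let ℒ : ℝ^d → ℝ be differentiable, L-smooth, with finite infimum ℒ* and satisfying the PL inequality with constant δ > 0. Let w ∈ ℝ^d and let G be a square-integrable random vector with E[G] = ∇ℒ(w) and E[‖G‖²] ≤ c_g(1 + c_h)‖∇ℒ(w)‖² + (2ασ_g²/(KB))·(ℒ(w) − ℒ*) + c_g σ_h², where c_g, c_h, α, σ_g, σ_h ≥ 0 and K, B ≥ 1. Then for any step size η with 0 < η ≤ 2/(L c_g (1 + c_h)), the update w' = w − ηG satisfies E[ℒ(w')] − ℒ* ≤ (1 − A₁)(ℒ(w) − ℒ*) + C₁, where A₁ = 2δη − Lδη²c_g(1 + c_h) − Lασ_g²η²/(KB) and C₁ = L c_g σ_h² η²/2. (One-step contraction for FedSGD under data heterogeneity.) -/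
open MeasureTheory RealInnerProductSpace

/-!
Smoothness bounds `ℒ (w - η G)` by a quadratic in `G`; taking expectations, unbiasedness turns
the linear term into `-η ‖∇ℒ w‖²`, and the second-moment hypothesis bounds the quadratic one.
What remains multiplies `‖∇ℒ w‖²` by `-η + L c_g (1 + c_h) η² / 2`, which the step-size
restriction makes nonpositive, so the PL inequality may replace `‖∇ℒ w‖²` by `2 δ (ℒ w - ℒ*)`.
-/

section Descent

variable {E : Type*} [NormedAddCommGroup E] [InnerProductSpace ℝ E]

lemma apply_sub_smul_le_of_quadratic_upper_bound {f : E → ℝ} {u g : E} {L : ℝ}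
    (hf : ∀ v, f v ≤ f u + ⟪g, v - u⟫ + L / 2 * ‖v - u‖ ^ 2) (η : ℝ) (x : E) :
    f (u - η • x) ≤ f u - η * ⟪g, x⟫ + L / 2 * η ^ 2 * ‖x‖ ^ 2 := by
  have h := hf (u - η • x)
  rwa [sub_sub_cancel_left, inner_neg_right, real_inner_smul_right, norm_neg, norm_smul,
    mul_pow, Real.norm_eq_abs, sq_abs, ← sub_eq_add_neg, ← mul_assoc] at h

variable [CompleteSpace E] {Ω : Type*} [MeasurableSpace Ω] {P : Measure Ω} [IsProbabilityMeasure P]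

lemma integral_sub_smul_le_of_quadratic_upper_bound {f : E → ℝ} {u g : E} {L m : ℝ}
    (hcont : Continuous f) (hm : ∀ v, m ≤ f v)
    (hf : ∀ v, f v ≤ f u + ⟪g, v - u⟫ + L / 2 * ‖v - u‖ ^ 2)
    {G : Ω → E} (hG : MemLp G 2 P) (hmean : ∫ ω, G ω ∂P = g) (η : ℝ) :
    ∫ ω, f (u - η • G ω) ∂P ≤ f u - η * ‖g‖ ^ 2 + L / 2 * η ^ 2 * ∫ ω, ‖G ω‖ ^ 2 ∂P := by
  have hG1 : Integrable G P := hG.integrable one_le_two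
  have hlin : Integrable (fun ω => f u - η * ⟪g, G ω⟫) P :=
    (integrable_const _).sub ((hG1.const_inner g).const_mul η)
  have hquad : Integrable (fun ω => L / 2 * η ^ 2 * ‖G ω‖ ^ 2) P :=
    hG.norm.integrable_sq.const_mul _
  have hupper := apply_sub_smul_le_of_quadratic_upper_bound hf η
  have hint : Integrable (fun ω => f (u - η • G ω)) P :=
    integrable_of_le_of_le
      (hcont.comp_aestronglyMeasurable (aestronglyMeasurable_const.sub
        (hG.aestronglyMeasurable.const_smul η)))
      (Filter.Eventually.of_forall fun ω => hm _) (Filter.Eventually.of_forall fun ω => hupper _)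
      (integrable_const m) (hlin.add hquad)
  calc ∫ ω, f (u - η • G ω) ∂P
      ≤ ∫ ω, (f u - η * ⟪g, G ω⟫ + L / 2 * η ^ 2 * ‖G ω‖ ^ 2) ∂P :=
        integral_mono hint (hlin.add hquad) fun ω => hupper _
    _ = f u - η * ‖g‖ ^ 2 + L / 2 * η ^ 2 * ∫ ω, ‖G ω‖ ^ 2 ∂P := by
        rw [integral_add hlin hquad, integral_sub (integrable_const _)
          ((hG1.const_inner g).const_mul η), integral_const_mul, integral_const_mul,
          integral_inner hG1, hmean, real_inner_self_eq_norm_sq]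
        simp

end Descent

lemma gap_le_of_descent_of_PL {f₀ fstar F s V M N C L δ η : ℝ}
    (hdescent : F ≤ f₀ - η * s + L / 2 * η ^ 2 * V)
    (hV : V ≤ M * s + N * (f₀ - fstar) + C) (hPL : s ≥ 2 * δ * (f₀ - fstar))
    (hL : 0 ≤ L) (hη : 0 ≤ η) (hstep : η * (L * M) ≤ 2) :
    F - fstar ≤ (1 - (2 * δ * η - L * δ * η ^ 2 * M - L * N * η ^ 2 / 2)) * (f₀ - fstar)
      + L * C * η ^ 2 / 2 := by
  have hcoef : -η + L * M * η ^ 2 / 2 ≤ 0 := by nlinarith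
  have hV' : L / 2 * η ^ 2 * V ≤ L / 2 * η ^ 2 * (M * s + N * (f₀ - fstar) + C) :=
    mul_le_mul_of_nonneg_left hV (by positivity)
  nlinarith [mul_le_mul_of_nonpos_left hPL hcoef]

theorem stmt_2_general {d : ℕ} (ℒ : EuclideanSpace ℝ (Fin d) → ℝ) (L Lstar δ : ℝ)
    (hdiff : Differentiable ℝ ℒ)
    (hsmooth : ∀ u v : EuclideanSpace ℝ (Fin d),
      ℒ v ≤ ℒ u + ⟪gradient ℒ u, v - u⟫ + L / 2 * ‖v - u‖ ^ 2)
    (hinf : IsGLB (Set.range ℒ) Lstar)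
    (hPL : ∀ v : EuclideanSpace ℝ (Fin d), ‖gradient ℒ v‖ ^ 2 ≥ 2 * δ * (ℒ v - Lstar))
    (w : EuclideanSpace ℝ (Fin d))
    (c_g c_h α σ_g σ_h : ℝ) (hcg : 0 ≤ c_g) (hch : 0 ≤ c_h)
    (K B : ℕ)
    {Ω : Type*} [MeasurableSpace Ω] (P : Measure Ω) [IsProbabilityMeasure P]
    (G : Ω → EuclideanSpace ℝ (Fin d)) (hG2 : MemLp G 2 P)
    (hunbiased : ∫ ω, G ω ∂P = gradient ℒ w)
    (hsecond : ∫ ω, ‖G ω‖ ^ 2 ∂P ≤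
      c_g * (1 + c_h) * ‖gradient ℒ w‖ ^ 2
        + (2 * α * σ_g ^ 2 / (K * B)) * (ℒ w - Lstar) + c_g * σ_h ^ 2)
    (η : ℝ) (hη0 : 0 < η) (hη : η ≤ 2 / (L * c_g * (1 + c_h))) :
    (∫ ω, ℒ (w - η • G ω) ∂P) - Lstar ≤
      (1 - (2 * δ * η - L * δ * η ^ 2 * c_g * (1 + c_h) - L * α * σ_g ^ 2 * η ^ 2 / (K * B)))
          * (ℒ w - Lstar)
        + L * c_g * σ_h ^ 2 * η ^ 2 / 2 := by
  have hLM : 0 < L * c_g * (1 + c_h) := by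
    by_contra! h
    linarith [div_nonpos_of_nonneg_of_nonpos zero_le_two h]
  have hL : 0 < L := pos_of_mul_pos_left (pos_of_mul_pos_left hLM (by linarith)) hcg
  have hstep : η * (L * (c_g * (1 + c_h))) ≤ 2 := by
    simpa only [mul_assoc] using (le_div_iff₀ hLM).mp hη
  have hdescent := integral_sub_smul_le_of_quadratic_upper_bound hdiff.continuous
    (fun v => hinf.1 ⟨v, rfl⟩) (hsmooth w) hG2 hunbiased η
  have := gap_le_of_descent_of_PL hdescent hsecond (hPL w) hL.le hη0.le hstep
  convert this using 3 <;> ring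

/-- **One-step contraction for FedSGD under data heterogeneity.** For an `L`-smooth
differentiable `ℒ` with infimum `Lstar` satisfying the PL inequality with constant `δ`,
and an unbiased square-integrable stochastic gradient `G` whose second moment satisfies
the combined batch-noise/heterogeneity bound, the update `w - η G` contracts the
optimality gap: `E[ℒ(w')] - ℒ* ≤ (1 - A₁) (ℒ(w) - ℒ*) + C₁`. -/
theorem stmt_2 {d : ℕ} (ℒ : EuclideanSpace ℝ (Fin d) → ℝ) (L Lstar δ : ℝ)
    (hdiff : Differentiable ℝ ℒ)
    (hsmooth : ∀ u v : EuclideanSpace ℝ (Fin d),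
      ℒ v ≤ ℒ u + ⟪gradient ℒ u, v - u⟫ + L / 2 * ‖v - u‖ ^ 2)
    (hinf : IsGLB (Set.range ℒ) Lstar)
    (hδ : 0 < δ)
    (hPL : ∀ v : EuclideanSpace ℝ (Fin d), ‖gradient ℒ v‖ ^ 2 ≥ 2 * δ * (ℒ v - Lstar))
    (w : EuclideanSpace ℝ (Fin d))
    (c_g c_h α σ_g σ_h : ℝ) (hcg : 0 ≤ c_g) (hch : 0 ≤ c_h) (hα : 0 ≤ α)
    (hσg : 0 ≤ σ_g) (hσh : 0 ≤ σ_h)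
    (K B : ℕ) (hK : 1 ≤ K) (hB : 1 ≤ B)
    {Ω : Type*} [MeasurableSpace Ω] (P : Measure Ω) [IsProbabilityMeasure P]
    (G : Ω → EuclideanSpace ℝ (Fin d)) (hG2 : MemLp G 2 P)
    (hunbiased : ∫ ω, G ω ∂P = gradient ℒ w)
    (hsecond : ∫ ω, ‖G ω‖ ^ 2 ∂P ≤
      c_g * (1 + c_h) * ‖gradient ℒ w‖ ^ 2
        + (2 * α * σ_g ^ 2 / (K * B)) * (ℒ w - Lstar) + c_g * σ_h ^ 2)
    (η : ℝ) (hη0 : 0 < η) (hη : η ≤ 2 / (L * c_g * (1 + c_h))) :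
    (∫ ω, ℒ (w - η • G ω) ∂P) - Lstar ≤
      (1 - (2 * δ * η - L * δ * η ^ 2 * c_g * (1 + c_h) - L * α * σ_g ^ 2 * η ^ 2 / (K * B)))
          * (ℒ w - Lstar)
        + L * c_g * σ_h ^ 2 * η ^ 2 / 2 :=
  stmt_2_general ℒ L Lstar δ hdiff hsmooth hinf hPL w c_g c_h α σ_g σ_h hcg hch K B P G hG2
    hunbiased hsecond η hη0 hη
end

section
/- Let ℒ : ℝ^d → ℝ be differentiable with finite infimum ℒ*, satisfying the PL inequality with constant δ > 0. Let L > 0, ζ ≥ 1, let w ∈ ℝ^d, η > 0, and let G be a square-integrable random vector such that the zeroth-order descent bound E[ℒ(w − ηG)] ≤ ℒ(w) − η‖∇ℒ(w)‖² + (Lζη²/2)·E[‖G‖²] holds, and E[‖G‖²] ≤ c_g(1 + c_h)‖∇ℒ(w)‖² + (2ασ_g²/(KB))·(ℒ(w) − ℒ*) + c_g σ_h² with c_g, c_h, α, σ_g, σ_h ≥ 0 and K, B ≥ 1. Then for 0 < η ≤ 2/(L ζ c_g (1 + c_h)), E[ℒ(w − ηG)] − ℒ* ≤ (1 − A₂)(ℒ(w)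 − ℒ*) + C₂, where A₂ = 2δη − Lζδη²c_g(1 + c_h) − Lζασ_g²η²/(KB) and C₂ = L ζ c_g σ_h² η²/2. (One-step contraction for ZO-FedSGD.) -/
open MeasureTheory RealInnerProductSpace

/-!
Substituting the second-moment bound into the descent bound leaves the gradient term with
coefficient `-η (1 - L ζ η c_g (1 + c_h) / 2)`, which is nonpositive exactly under the step-size
restriction; the PL inequality then trades `‖∇ℒ(w)‖²` for `2 δ (ℒ(w) - ℒ*)`.
-/

theorem mul_le_of_le_div_of_pos {η X c : ℝ} (hη : 0 < η) (hc : 0 ≤ c) (h : η ≤ c / X) :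
    η * X ≤ c := by
  rcases le_or_gt X 0 with hX | hX
  · nlinarith
  · exact (le_div_iff₀ hX).mp h

theorem le_of_descent_of_second_moment {f₀ f₁ g M η β a b s Δ : ℝ} (hβ : 0 ≤ β)
    (hdescent : f₁ ≤ f₀ - η * g + β * η ^ 2 / 2 * M) (hM : M ≤ a * g + b * Δ + s) :
    f₁ ≤ f₀ - η * (1 - β * η * a / 2) * g + β * η ^ 2 / 2 * (b * Δ + s) := by
  have := mul_le_mul_of_nonneg_left hM (by positivity : 0 ≤ β * η ^ 2 / 2)
  linarith

theorem sub_le_contraction_of_pl {f₀ f₁ fstar g η β a b s δ : ℝ} (hη : 0 ≤ η)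
    (hstep : β * η * a ≤ 2) (hPL : 2 * δ * (f₀ - fstar) ≤ g)
    (h : f₁ ≤ f₀ - η * (1 - β * η * a / 2) * g + β * η ^ 2 / 2 * (b * (f₀ - fstar) + s)) :
    f₁ - fstar ≤ (1 - (2 * δ * η - β * δ * η ^ 2 * a - β * b * η ^ 2 / 2)) * (f₀ - fstar)
      + β * s * η ^ 2 / 2 := by
  have := mul_le_mul_of_nonneg_left hPL
    (mul_nonneg hη (by linarith) : 0 ≤ η * (1 - β * η * a / 2))
  linarith

theorem stmt_3_general {d : ℕ} (ℒ : EuclideanSpace ℝ (Fin d) → ℝ) (Lstar δ L ζ : ℝ)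
    (hPL : ∀ v : EuclideanSpace ℝ (Fin d), ‖gradient ℒ v‖ ^ 2 ≥ 2 * δ * (ℒ v - Lstar))
    (hL : 0 < L) (hζ : 1 ≤ ζ)
    (w : EuclideanSpace ℝ (Fin d)) (η : ℝ) (hη0 : 0 < η)
    (c_g c_h α σ_g σ_h : ℝ)
    (K B : ℕ)
    {Ω : Type*} [MeasurableSpace Ω] (P : Measure Ω)
    (G : Ω → EuclideanSpace ℝ (Fin d))
    (hdescent : ∫ ω, ℒ (w - η • G ω) ∂P ≤
      ℒ w - η * ‖gradient ℒ w‖ ^ 2 + L * ζ * η ^ 2 / 2 * ∫ ω, ‖G ω‖ ^ 2 ∂P)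
    (hsecond : ∫ ω, ‖G ω‖ ^ 2 ∂P ≤
      c_g * (1 + c_h) * ‖gradient ℒ w‖ ^ 2
        + (2 * α * σ_g ^ 2 / (K * B)) * (ℒ w - Lstar) + c_g * σ_h ^ 2)
    (hη : η ≤ 2 / (L * ζ * c_g * (1 + c_h))) :
    (∫ ω, ℒ (w - η • G ω) ∂P) - Lstar ≤
      (1 - (2 * δ * η - L * ζ * δ * η ^ 2 * c_g * (1 + c_h)
            - L * ζ * α * σ_g ^ 2 * η ^ 2 / (K * B)))
          * (ℒ w - Lstar)
        + L * ζ * c_g * σ_h ^ 2 * η ^ 2 / 2 := by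
  have hLζ : 0 ≤ L * ζ := by positivity
  have hstep : L * ζ * η * (c_g * (1 + c_h)) ≤ 2 := by
    have := mul_le_of_le_div_of_pos hη0 zero_le_two hη
    linarith
  have hcombined := le_of_descent_of_second_moment hLζ hdescent hsecond
  calc (∫ ω, ℒ (w - η • G ω) ∂P) - Lstar
      ≤ _ := sub_le_contraction_of_pl hη0.le hstep (hPL w) hcombined
    _ = _ := by ring

/-- **One-step contraction for ZO-FedSGD.** Taking the dimension-free zeroth-order descent
bound (with low-effective-rank factor `ζ`) and the combined second-moment bound as
hypotheses, the update `w - η G` contracts the optimality gap: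
`E[ℒ(w - η G)] - ℒ* ≤ (1 - A₂) (ℒ(w) - ℒ*) + C₂`. -/
theorem stmt_3 {d : ℕ} (ℒ : EuclideanSpace ℝ (Fin d) → ℝ) (Lstar δ L ζ : ℝ)
    (hdiff : Differentiable ℝ ℒ)
    (hinf : IsGLB (Set.range ℒ) Lstar)
    (hδ : 0 < δ)
    (hPL : ∀ v : EuclideanSpace ℝ (Fin d), ‖gradient ℒ v‖ ^ 2 ≥ 2 * δ * (ℒ v - Lstar))
    (hL : 0 < L) (hζ : 1 ≤ ζ)
    (w : EuclideanSpace ℝ (Fin d)) (η : ℝ) (hη0 : 0 < η)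
    (c_g c_h α σ_g σ_h : ℝ) (hcg : 0 ≤ c_g) (hch : 0 ≤ c_h) (hα : 0 ≤ α)
    (hσg : 0 ≤ σ_g) (hσh : 0 ≤ σ_h)
    (K B : ℕ) (hK : 1 ≤ K) (hB : 1 ≤ B)
    {Ω : Type*} [MeasurableSpace Ω] (P : Measure Ω) [IsProbabilityMeasure P]
    (G : Ω → EuclideanSpace ℝ (Fin d)) (hG2 : MemLp G 2 P)
    (hdescent : ∫ ω, ℒ (w - η • G ω) ∂P ≤
      ℒ w - η * ‖gradient ℒ w‖ ^ 2 + L * ζ * η ^ 2 / 2 * ∫ ω, ‖G ω‖ ^ 2 ∂P)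
    (hsecond : ∫ ω, ‖G ω‖ ^ 2 ∂P ≤
      c_g * (1 + c_h) * ‖gradient ℒ w‖ ^ 2
        + (2 * α * σ_g ^ 2 / (K * B)) * (ℒ w - Lstar) + c_g * σ_h ^ 2)
    (hη : η ≤ 2 / (L * ζ * c_g * (1 + c_h))) :
    (∫ ω, ℒ (w - η • G ω) ∂P) - Lstar ≤
      (1 - (2 * δ * η - L * ζ * δ * η ^ 2 * c_g * (1 + c_h)
            - L * ζ * α * σ_g ^ 2 * η ^ 2 / (K * B)))
          * (ℒ w - Lstar)
        + L * ζ * c_g * σ_h ^ 2 * η ^ 2 / 2 :=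
  stmt_3_general ℒ Lstar δ L ζ hPL hL hζ w η hη0 c_g c_h α σ_g σ_h K B P G hdescent hsecond hη
end

section
/- Fix an integer K ≥ 1 and ε ≥ 0. For a sign vector s ∈ {−1, +1}^K and f ∈ {−1, +1}, set q_f(s) = Σ_{k=1}^K (1/2 + f·s_k), and define the output probability P_s(f) = exp(ε·q_f(s)/4) / (exp(ε·q_{+1}(s)/4) + exp(ε·q_{−1}(s)/4)). If s, s' ∈ {−1, +1}^K differ in at most one coordinate, then for every f ∈ {−1, +1}, P_s(f) ≤ exp(ε)·P_{s'}(f). In other words, the randomized sign-aggregation mechanism f_DP is (ε, 0)-differentially private. (Differential privacy guarantee for DP-FeedSign.) -/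
open Finset

/-- The vote count `q_f(s) = ∑ k (1/2 + f * s_k)` of the DP-FeedSign mechanism. -/
noncomputable def dpQ {K : ℕ} (f : ℝ) (s : Fin K → ℝ) : ℝ :=
  ∑ k : Fin K, (1 / 2 + f * s k)

/-- Output probability of the randomized sign-aggregation mechanism `f_DP`:
`P_s(f) = exp(ε q_f(s) / 4) / (exp(ε q_{+1}(s) / 4) + exp(ε q_{-1}(s) / 4))`. -/
noncomputable def dpProb {K : ℕ} (ε : ℝ) (s : Fin K → ℝ) (f : ℝ) : ℝ :=
  Real.exp (ε * dpQ f s / 4) /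
    (Real.exp (ε * dpQ 1 s / 4) + Real.exp (ε * dpQ (-1) s / 4))

lemma dpQ_diff_abs {K : ℕ} (g : ℝ) (hg : |g| = 1) (s s' : Fin K → ℝ)
    (hs : ∀ k, s k = 1 ∨ s k = -1) (hs' : ∀ k, s' k = 1 ∨ s' k = -1)
    (hham : ({k | s k ≠ s' k} : Set (Fin K)).Subsingleton) :
    |dpQ g s - dpQ g s'| ≤ 2 := by
  have hdiff : dpQ g s - dpQ g s' = ∑ k : Fin K, g * (s k - s' k) := by
    unfold dpQ
    rw [← Finset.sum_sub_distrib]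
    apply Finset.sum_congr rfl
    intro k _
    ring
  by_cases h : ∀ k, s k = s' k
  · have : dpQ g s - dpQ g s' = 0 := by
      rw [hdiff]
      apply Finset.sum_eq_zero
      intro k _
      rw [h k]; ring
    rw [this]; norm_num
  · push_neg at h
    obtain ⟨k₀, hk₀⟩ := h
    have hsum : (∑ k : Fin K, g * (s k - s' k)) = g * (s k₀ - s' k₀) := by
      apply Finset.sum_eq_single
      · intro k _ hk
        by_cases hke : s k = s' k
        · rw [hke]; ring
        · exact absurd (hham hke hk₀) hk
      · intro h'; exact absurd (Finset.mem_univ k₀) h'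
    rw [hdiff, hsum, abs_mul, hg, one_mul]
    rcases hs k₀ with h1 | h1 <;> rcases hs' k₀ with h2 | h2 <;>
      rw [h1, h2] <;> norm_num

/-- **Differential privacy of DP-FeedSign.** If the sign vectors `s, s' ∈ {-1, 1}^K` differ
in at most one coordinate, then for every output `f ∈ {-1, 1}`,
`P_s(f) ≤ exp(ε) * P_{s'}(f)`; i.e. the mechanism is `(ε, 0)`-differentially private. -/
theorem stmt_6 (K : ℕ) (hK : 1 ≤ K) (ε : ℝ) (hε : 0 ≤ ε)
    (s s' : Fin K → ℝ)
    (hs : ∀ k, s k = 1 ∨ s k = -1) (hs' : ∀ k, s' k = 1 ∨ s' k = -1)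
    (hham : ({k | s k ≠ s' k} : Set (Fin K)).Subsingleton)
    (f : ℝ) (hf : f = 1 ∨ f = -1) :
    dpProb ε s f ≤ Real.exp ε * dpProb ε s' f := by
  have key : ∀ g : ℝ, |g| = 1 → |dpQ g s - dpQ g s'| ≤ 2 :=
    fun g hg => dpQ_diff_abs g hg s s' hs hs' hham
  have hf1 : |f| = 1 := by rcases hf with h | h <;> rw [h] <;> norm_num
  have h1 : |(1:ℝ)| = 1 := by norm_num
  have hm1 : |(-1:ℝ)| = 1 := by norm_num
  -- numerator bound
  have hnum : Real.exp (ε * dpQ f s / 4) ≤ Real.exp (ε/2) * Real.exp (ε * dpQ f s' / 4) := by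
    rw [← Real.exp_add]
    apply Real.exp_le_exp.mpr
    have h := (abs_le.mp (key f hf1)).2
    have := mul_le_mul_of_nonneg_left h hε
    linarith
  -- denominator bound
  have hden : Real.exp (ε * dpQ 1 s' / 4) + Real.exp (ε * dpQ (-1) s' / 4)
      ≤ Real.exp (ε/2) * (Real.exp (ε * dpQ 1 s / 4) + Real.exp (ε * dpQ (-1) s / 4)) := by
    rw [mul_add]
    gcongr
    · rw [← Real.exp_add]
      apply Real.exp_le_exp.mpr
      have h := (abs_le.mp (key 1 h1)).1
      have := mul_le_mul_of_nonneg_left h hε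
      linarith
    · rw [← Real.exp_add]
      apply Real.exp_le_exp.mpr
      have h := (abs_le.mp (key (-1) hm1)).1
      have := mul_le_mul_of_nonneg_left h hε
      linarith
  have hDpos : 0 < Real.exp (ε * dpQ 1 s / 4) + Real.exp (ε * dpQ (-1) s / 4) :=
    by positivity
  have hD'pos : 0 < Real.exp (ε * dpQ 1 s' / 4) + Real.exp (ε * dpQ (-1) s' / 4) :=
    by positivity
  unfold dpProb
  rw [div_le_iff₀ hDpos]
  have h2 : Real.exp ε * (Real.exp (ε * dpQ f s' / 4) /
      (Real.exp (ε * dpQ 1 s' / 4) + Real.exp (ε * dpQ (-1) s' / 4))) *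
      (Real.exp (ε * dpQ 1 s / 4) + Real.exp (ε * dpQ (-1) s / 4))
      = Real.exp ε * Real.exp (ε * dpQ f s' / 4) *
        ((Real.exp (ε * dpQ 1 s / 4) + Real.exp (ε * dpQ (-1) s / 4)) /
         (Real.exp (ε * dpQ 1 s' / 4) + Real.exp (ε * dpQ (-1) s' / 4))) := by
    field_simp
  rw [h2]
  have hfrac : Real.exp (-(ε/2)) ≤
      (Real.exp (ε * dpQ 1 s / 4) + Real.exp (ε * dpQ (-1) s / 4)) /
      (Real.exp (ε * dpQ 1 s' / 4) + Real.exp (ε * dpQ (-1) s' / 4)) := by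
    rw [le_div_iff₀ hD'pos]
    calc Real.exp (-(ε/2)) * (Real.exp (ε * dpQ 1 s' / 4) + Real.exp (ε * dpQ (-1) s' / 4))
        ≤ Real.exp (-(ε/2)) * (Real.exp (ε/2) * (Real.exp (ε * dpQ 1 s / 4) + Real.exp (ε * dpQ (-1) s / 4))) := by
          gcongr
      _ = Real.exp (ε * dpQ 1 s / 4) + Real.exp (ε * dpQ (-1) s / 4) := by
          rw [← mul_assoc, ← Real.exp_add]; simp
  calc Real.exp (ε * dpQ f s / 4)
      ≤ Real.exp (ε/2) * Real.exp (ε * dpQ f s' / 4) := hnum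
    _ = Real.exp ε * Real.exp (ε * dpQ f s' / 4) * Real.exp (-(ε/2)) := by
        rw [← Real.exp_add, mul_assoc, ← Real.exp_add, ← Real.exp_add]; congr 1; ring
    _ ≤ Real.exp ε * Real.exp (ε * dpQ f s' / 4) *
        ((Real.exp (ε * dpQ 1 s / 4) + Real.exp (ε * dpQ (-1) s / 4)) /
         (Real.exp (ε * dpQ 1 s' / 4) + Real.exp (ε * dpQ (-1) s' / 4))) := by
        have hpos : 0 ≤ Real.exp ε * Real.exp (ε * dpQ f s' / 4) := by positivity
        exact mul_le_mul_of_nonneg_left hfrac hpos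
end

section
/- Let ℒ : ℝ^d → ℝ be differentiable with finite infimum ℒ*, satisfying the PL inequality with constant δ > 0. Fix L > 0, ζ ≥ 1, c_g, c_h, α, σ_g, σ_h ≥ 0, integers K, B ≥ 1, and a step size η with 0 < η ≤ 2/(Lζc_g(1 + c_h)). Let (w_t)_{t≥0} evolve by w_{t+1} = w_t − ηG_t, where at each step t, conditionally on the past: E[ℒ(w_t − ηG_t)] ≤ ℒ(w_t) − η‖∇ℒ(w_t)‖² + (Lζη²/2)·E[‖G_t‖²] (the zeroth-order descent bound), and E[‖G_t‖²] ≤ c_g(1 + c_h)‖∇ℒ(w_t)‖² + (2ασ_g²/(KB))·(ℒ(w_t) − ℒ*) + c_g σ_h². Set A₂ = 2δη − Lζδη²c_g(1 + c_h) − Lζασ_g²η²/(KB) and C₂ = Lζc_gσ_h²η²/2, and assume 0 < A₂ < 1. Then for all t ≥ 0, E[ℒ(w_t)] − ℒ* − C₂/A₂ ≤ (1 − A₂)^t·(ℒ(w_0) − ℒ* − C₂/A₂); in particular, if ℒ(w_0) − ℒ* > C₂/A₂ and ε > 0, the gap to the error floor C₂/A₂ is at most ε after t ≥ (1/A₂)·log((ℒ(w_0)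 − ℒ* − C₂/A₂)/ε) steps. (Global convergence of ZO-FedSGD, Theorem 1.) -/
/-!
Substituting the second-moment bound into the descent bound leaves `‖∇ℒ(w_t)‖²` with the
coefficient `η - Lζη²c_g(1 + c_h)/2`, which is nonnegative by the step-size condition, so the
PL inequality applies to it and gives, almost surely,
`E[ℒ(w_{t+1}) | ℱ_t] - ℒ* ≤ (1 - A₂)(ℒ(w_t) - ℒ*) + C₂`.
Taking expectations, the gap `e_t = E[ℒ(w_t)] - ℒ*` obeys `e_{t+1} ≤ (1 - A₂) e_t + C₂`, whose
fixed point is `C₂ / A₂`; the distance to it decays like `(1 - A₂)^t ≤ exp(-A₂ t)`.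
-/

open MeasureTheory ProbabilityTheory RealInnerProductSpace

theorem mul_le_two_of_le_two_div {η D : ℝ} (hη0 : 0 < η) (hη : η ≤ 2 / D) : η * D ≤ 2 := by
  rcases le_or_gt D 0 with hD | hD
  · nlinarith
  · exact (le_div_iff₀ hD).mp hη

/-- One step of the PL argument for a real loss value `a` with squared gradient norm `g`,
expected next loss `E` and second moment `S`. -/
theorem gap_le_of_descent_of_secondMoment {a g E S Lstar δ η κ D β γ : ℝ} (hκ : 0 ≤ κ)
    (hκD : κ * D ≤ η) (hPL : 2 * δ * (a - Lstar) ≤ g) (hdescent : E ≤ a - η * g + κ * S)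
    (hsecond : S ≤ D * g + β * (a - Lstar) + γ) :
    E - Lstar ≤ (1 - (2 * δ * (η - κ * D) - κ * β)) * (a - Lstar) + κ * γ := by
  nlinarith [mul_le_mul_of_nonneg_left hsecond hκ,
    mul_le_mul_of_nonneg_left hPL (sub_nonneg.mpr hκD)]

theorem integral_le_of_ae_condExp_le {Ω : Type*} {m m₀ : MeasurableSpace Ω} {μ : Measure Ω}
    [IsProbabilityMeasure μ] (hm : m ≤ m₀) {f h : Ω → ℝ} (hh : Integrable h μ) {r s : ℝ}
    (hf : ∀ᵐ ω ∂μ, μ[f | m] ω ≤ r * h ω + s) :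
    ∫ ω, f ω ∂μ ≤ r * ∫ ω, h ω ∂μ + s := by
  have hbound : Integrable (fun ω => r * h ω + s) μ := (hh.const_mul r).add (integrable_const s)
  have := integral_mono_ae integrable_condExp hbound hf
  rwa [integral_condExp hm, integral_add (hh.const_mul r) (integrable_const s),
    integral_const_mul, integral_const, probReal_univ, one_smul] at this

/-- The fixed point `C / A` of `e ↦ (1 - A) e + C` attracts at rate `1 - A`. -/
theorem sub_div_le_pow_mul_of_le_one_sub_mul_add {e : ℕ → ℝ} {A C : ℝ} (hA0 : A ≠ 0)
    (hA1 : A ≤ 1) (he : ∀ t, e (t + 1) ≤ (1 - A) * e t + C) (t : ℕ) :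
    e t - C / A ≤ (1 - A) ^ t * (e 0 - C / A) := by
  induction t with
  | zero => simp
  | succ t ih =>
    have hfloor : (1 - A) * (C / A) + C = C / A := by field_simp; ring
    calc e (t + 1) - C / A ≤ (1 - A) * (e t - C / A) := by linarith [he t]
      _ ≤ (1 - A) * ((1 - A) ^ t * (e 0 - C / A)) :=
        mul_le_mul_of_nonneg_left ih (sub_nonneg.mpr hA1)
      _ = (1 - A) ^ (t + 1) * (e 0 - C / A) := by ring

theorem one_sub_pow_mul_le_of_log_div_le {A x ε : ℝ} (hA0 : 0 < A) (hA1 : A ≤ 1) (hx : 0 < x)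
    (hε : 0 < ε) {t : ℕ} (ht : 1 / A * Real.log (x / ε) ≤ t) : (1 - A) ^ t * x ≤ ε := by
  have hlog : Real.log (x / ε) ≤ A * t := by
    rwa [one_div, inv_mul_le_iff₀ hA0] at ht
  calc (1 - A) ^ t * x ≤ Real.exp (-A) ^ t * x := by
        gcongr
        exact Real.one_sub_le_exp_neg A
    _ = Real.exp (-(A * t)) * x := by rw [← Real.exp_nat_mul]; ring_nf
    _ ≤ Real.exp (-Real.log (x / ε)) * x := by gcongr
    _ = ε := by rw [Real.exp_neg, Real.exp_log (by positivity)]; field_simp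

theorem stmt_17_general {d : ℕ} (ℒ : EuclideanSpace ℝ (Fin d) → ℝ) (Lstar δ L ζ : ℝ)
    (hPL : ∀ v : EuclideanSpace ℝ (Fin d), ‖gradient ℒ v‖ ^ 2 ≥ 2 * δ * (ℒ v - Lstar))
    (hL : 0 < L) (hζ : 1 ≤ ζ)
    (c_g c_h α σ_g σ_h : ℝ)
    (K B : ℕ)
    (η : ℝ) (hη0 : 0 < η) (hη : η ≤ 2 / (L * ζ * c_g * (1 + c_h)))
    {Ω : Type*} {m : MeasurableSpace Ω} (P : Measure Ω) [IsProbabilityMeasure P]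
    (ℱ : Filtration ℕ m)
    (w : ℕ → Ω → EuclideanSpace ℝ (Fin d)) (G : ℕ → Ω → EuclideanSpace ℝ (Fin d))
    (w0 : EuclideanSpace ℝ (Fin d)) (hw0 : ∀ ω, w 0 ω = w0)
    (hupdate : ∀ t ω, w (t + 1) ω = w t ω - η • G t ω)
    (hint : ∀ t, Integrable (fun ω => ℒ (w t ω)) P)
    (hdescent : ∀ t, ∀ᵐ ω ∂P,
      (P[(fun ω' => ℒ (w t ω' - η • G t ω')) | ℱ t]) ω ≤
        ℒ (w t ω) - η * ‖gradient ℒ (w t ω)‖ ^ 2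
          + L * ζ * η ^ 2 / 2 * (P[(fun ω' => ‖G t ω'‖ ^ 2) | ℱ t]) ω)
    (hsecond : ∀ t, ∀ᵐ ω ∂P,
      (P[(fun ω' => ‖G t ω'‖ ^ 2) | ℱ t]) ω ≤
        c_g * (1 + c_h) * ‖gradient ℒ (w t ω)‖ ^ 2
          + (2 * α * σ_g ^ 2 / (K * B)) * (ℒ (w t ω) - Lstar) + c_g * σ_h ^ 2)
    (A₂ C₂ : ℝ)
    (hA₂def : A₂ = 2 * δ * η - L * ζ * δ * η ^ 2 * c_g * (1 + c_h)
        - L * ζ * α * σ_g ^ 2 * η ^ 2 / (K * B))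
    (hC₂def : C₂ = L * ζ * c_g * σ_h ^ 2 * η ^ 2 / 2)
    (hA₂0 : 0 < A₂) (hA₂1 : A₂ < 1) :
    (∀ t : ℕ, (∫ ω, ℒ (w t ω) ∂P) - Lstar - C₂ / A₂ ≤
        (1 - A₂) ^ t * (ℒ w0 - Lstar - C₂ / A₂)) ∧
      (ℒ w0 - Lstar > C₂ / A₂ → ∀ ε : ℝ, 0 < ε →
        ∀ t : ℕ, (1 / A₂) * Real.log ((ℒ w0 - Lstar - C₂ / A₂) / ε) ≤ (t : ℝ) →
          (∫ ω, ℒ (w t ω) ∂P) - Lstar - C₂ / A₂ ≤ ε) := by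
  have hκ : 0 ≤ L * ζ * η ^ 2 / 2 := by
    have : 0 ≤ ζ := by linarith
    positivity
  have hκD : L * ζ * η ^ 2 / 2 * (c_g * (1 + c_h)) ≤ η := by
    nlinarith [mul_le_two_of_le_two_div hη0 hη]
  have hA₂ : A₂ = 2 * δ * (η - L * ζ * η ^ 2 / 2 * (c_g * (1 + c_h)))
      - L * ζ * η ^ 2 / 2 * (2 * α * σ_g ^ 2 / (K * B)) := by
    rw [hA₂def]; ring
  have hC₂ : C₂ = L * ζ * η ^ 2 / 2 * (c_g * σ_h ^ 2) := by
    rw [hC₂def]; ring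
  simp_rw [← hupdate] at hdescent
  have hstep (t : ℕ) : ∫ ω, ℒ (w (t + 1) ω) ∂P - Lstar ≤
      (1 - A₂) * (∫ ω, ℒ (w t ω) ∂P - Lstar) + C₂ := by
    have hcond : ∀ᵐ ω ∂P, P[fun ω' => ℒ (w (t + 1) ω') | ℱ t] ω ≤
        (1 - A₂) * (ℒ (w t ω) - Lstar) + (Lstar + C₂) := by
      filter_upwards [hdescent t, hsecond t] with ω hdesc hsec
      have := gap_le_of_descent_of_secondMoment hκ hκD (hPL (w t ω)) hdesc hsec
      rw [hA₂, hC₂]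
      linarith
    have := integral_le_of_ae_condExp_le (h := fun ω => ℒ (w t ω) - Lstar) (ℱ.le t)
      ((hint t).sub (integrable_const Lstar)) hcond
    rw [integral_sub (hint t) (integrable_const Lstar), integral_const, probReal_univ,
      one_smul] at this
    linarith
  have hcontract := sub_div_le_pow_mul_of_le_one_sub_mul_add
    (e := fun t => ∫ ω, ℒ (w t ω) ∂P - Lstar) hA₂0.ne' hA₂1.le hstep
  simp only [hw0, integral_const, probReal_univ, one_smul] at hcontract
  refine ⟨hcontract, fun hfloor ε hε t ht => (hcontract t).trans ?_⟩
  exact one_sub_pow_mul_le_of_log_div_le hA₂0 hA₂1.le (by linarith) hε ht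

/-- **Global convergence of ZO-FedSGD (Theorem 1).** Under the PL inequality, the per-step
zeroth-order descent bound (with low-effective-rank factor `ζ`) and the combined
second-moment bound, both conditional on the past `ℱ t`, the iterates
`w (t+1) = w t - η • G t` satisfy
`E[ℒ(w_t)] - ℒ* - C₂/A₂ ≤ (1 - A₂)^t (ℒ(w_0) - ℒ* - C₂/A₂)`, and the gap to the error
floor `C₂/A₂` is at most `ε` after `(1/A₂) log((ℒ(w_0) - ℒ* - C₂/A₂)/ε)` steps. -/
theorem stmt_17 {d : ℕ} (ℒ : EuclideanSpace ℝ (Fin d) → ℝ) (Lstar δ L ζ : ℝ)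
    (hdiff : Differentiable ℝ ℒ)
    (hinf : IsGLB (Set.range ℒ) Lstar)
    (hδ : 0 < δ)
    (hPL : ∀ v : EuclideanSpace ℝ (Fin d), ‖gradient ℒ v‖ ^ 2 ≥ 2 * δ * (ℒ v - Lstar))
    (hL : 0 < L) (hζ : 1 ≤ ζ)
    (c_g c_h α σ_g σ_h : ℝ) (hcg : 0 ≤ c_g) (hch : 0 ≤ c_h) (hα : 0 ≤ α)
    (hσg : 0 ≤ σ_g) (hσh : 0 ≤ σ_h)
    (K B : ℕ) (hK : 1 ≤ K) (hB : 1 ≤ B)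
    (η : ℝ) (hη0 : 0 < η) (hη : η ≤ 2 / (L * ζ * c_g * (1 + c_h)))
    {Ω : Type*} {m : MeasurableSpace Ω} (P : Measure Ω) [IsProbabilityMeasure P]
    (ℱ : Filtration ℕ m)
    (w : ℕ → Ω → EuclideanSpace ℝ (Fin d)) (G : ℕ → Ω → EuclideanSpace ℝ (Fin d))
    (w0 : EuclideanSpace ℝ (Fin d)) (hw0 : ∀ ω, w 0 ω = w0)
    (hupdate : ∀ t ω, w (t + 1) ω = w t ω - η • G t ω)
    (hadapted : ∀ t, StronglyMeasurable[ℱ t] (w t))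
    (hG2 : ∀ t, MemLp (G t) 2 P)
    (hint : ∀ t, Integrable (fun ω => ℒ (w t ω)) P)
    (hdescent : ∀ t, ∀ᵐ ω ∂P,
      (P[(fun ω' => ℒ (w t ω' - η • G t ω')) | ℱ t]) ω ≤
        ℒ (w t ω) - η * ‖gradient ℒ (w t ω)‖ ^ 2
          + L * ζ * η ^ 2 / 2 * (P[(fun ω' => ‖G t ω'‖ ^ 2) | ℱ t]) ω)
    (hsecond : ∀ t, ∀ᵐ ω ∂P,
      (P[(fun ω' => ‖G t ω'‖ ^ 2) | ℱ t]) ω ≤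
        c_g * (1 + c_h) * ‖gradient ℒ (w t ω)‖ ^ 2
          + (2 * α * σ_g ^ 2 / (K * B)) * (ℒ (w t ω) - Lstar) + c_g * σ_h ^ 2)
    (A₂ C₂ : ℝ)
    (hA₂def : A₂ = 2 * δ * η - L * ζ * δ * η ^ 2 * c_g * (1 + c_h)
        - L * ζ * α * σ_g ^ 2 * η ^ 2 / (K * B))
    (hC₂def : C₂ = L * ζ * c_g * σ_h ^ 2 * η ^ 2 / 2)
    (hA₂0 : 0 < A₂) (hA₂1 : A₂ < 1) :
    (∀ t : ℕ, (∫ ω, ℒ (w t ω) ∂P) - Lstar - C₂ / A₂ ≤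
        (1 - A₂) ^ t * (ℒ w0 - Lstar - C₂ / A₂)) ∧
      (ℒ w0 - Lstar > C₂ / A₂ → ∀ ε : ℝ, 0 < ε →
        ∀ t : ℕ, (1 / A₂) * Real.log ((ℒ w0 - Lstar - C₂ / A₂) / ε) ≤ (t : ℝ) →
          (∫ ω, ℒ (w t ω) ∂P) - Lstar - C₂ / A₂ ≤ ε) :=
  stmt_17_general ℒ Lstar δ L ζ hPL hL hζ c_g c_h α σ_g σ_h K B η hη0 hη P ℱ w G w0 hw0 hupdate hint
    hdescent hsecond A₂ C₂ hA₂def hC₂def hA₂0 hA₂1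
end
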